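/- arXiv:1809.06880 — 5 statements merged into one kernel-verified Lean document; each statement's English description precedes it below -/
import Mathlib

section
/- For density matrices ρ and σ, the maximal coherence tensorizes: η(ρ ⊗ σ) = max{η(ρ), η(σ)}. -/
open scoped ComplexOrder

open Kronecker

noncomputable def eta {n : Type*} [Fintype n] (A : Matrix n n ℂ) : ℝ :=
  sSup {x : ℝ | ∃ i j : n, i ≠ j ∧ A i i ≠ 0 ∧ A j j ≠ 0 ∧
    x = ‖A i j‖ / Real.sqrt ((A i i).re * (A j j).re)}

/-!
Write `r_A(i, j) = |A_ij| / √(A_ii A_jj)`. For positive semidefinite matrices the ratios are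
multiplicative under the Kronecker product, `r_{ρ⊗σ}((i,k),(j,l)) = r_ρ(i,j) r_σ(k,l)`, they are at
most `1` (Cauchy–Schwarz), and `r_A(i,i) = 1` whenever `A_ii ≠ 0`. Hence every off-diagonal ratio of
`ρ ⊗ σ` is bounded by an off-diagonal ratio of `ρ` (if `i ≠ j`) or of `σ` (if `i = j`). Conversely,
unit trace provides nonzero diagonal entries `σ_kk` and `ρ_ii`, and pairing with them reproduces
every ratio of `ρ` and of `σ` as a ratio of `ρ ⊗ σ`.
-/

namespace Matrix

variable {n m : Type*}

noncomputable def coherenceRatio (A : Matrix n n ℂ) (i j : n) : ℝ :=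
  ‖A i j‖ / √((A i i).re * (A j j).re)

lemma coherenceRatio_nonneg (A : Matrix n n ℂ) (i j : n) : 0 ≤ coherenceRatio A i j := by
  unfold coherenceRatio
  positivity

lemma exists_diag_ne_zero_of_trace_ne_zero [Fintype n] {A : Matrix n n ℂ} (h : A.trace ≠ 0) :
    ∃ i, A i i ≠ 0 := by
  obtain ⟨i, -, hi⟩ := Finset.exists_ne_zero_of_sum_ne_zero h
  exact ⟨i, hi⟩

namespace PosSemidef

variable {A : Matrix n n ℂ} {B : Matrix m m ℂ}

lemma re_diag_eq_norm (hA : A.PosSemidef) (i : n) : (A i i).re = ‖A i i‖ :=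
  Complex.re_eq_norm.mpr hA.diag_nonneg

lemma coherenceRatio_eq (hA : A.PosSemidef) (i j : n) :
    coherenceRatio A i j = ‖A i j‖ / √(‖A i i‖ * ‖A j j‖) := by
  rw [coherenceRatio, hA.re_diag_eq_norm, hA.re_diag_eq_norm]

/-- Read off from the nonnegative determinant of the principal `2 × 2` submatrix on `i, j`. -/
lemma norm_apply_sq_le (hA : A.PosSemidef) (i j : n) : ‖A i j‖ ^ 2 ≤ ‖A i i‖ * ‖A j j‖ := by
  have hdet := (hA.submatrix ![i, j]).det_nonneg
  rw [det_fin_two] at hdet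
  simp only [submatrix_apply, cons_val_zero, cons_val_one] at hdet
  rw [← hA.1.apply j i, Complex.star_def, Complex.mul_conj',
    ← Complex.norm_of_nonneg' (hA.diag_nonneg (i := i)),
    ← Complex.norm_of_nonneg' (hA.diag_nonneg (i := j))] at hdet
  exact_mod_cast sub_nonneg.mp hdet

lemma coherenceRatio_le_one (hA : A.PosSemidef) (i j : n) : coherenceRatio A i j ≤ 1 := by
  rw [hA.coherenceRatio_eq]
  exact div_le_one_of_le₀
    ((Real.le_sqrt (norm_nonneg _) (by positivity)).mpr (hA.norm_apply_sq_le i j))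
    (Real.sqrt_nonneg _)

lemma coherenceRatio_self (hA : A.PosSemidef) {i : n} (hi : A i i ≠ 0) :
    coherenceRatio A i i = 1 := by
  rw [hA.coherenceRatio_eq, Real.sqrt_mul_self (norm_nonneg _),
    div_self (norm_ne_zero_iff.mpr hi)]

lemma coherenceRatio_kronecker [Finite n] [Finite m] (hA : A.PosSemidef) (hB : B.PosSemidef)
    (i j : n) (k l : m) :
    coherenceRatio (A ⊗ₖ B) (i, k) (j, l) = coherenceRatio A i j * coherenceRatio B k l := by
  rw [(hA.kronecker hB).coherenceRatio_eq, hA.coherenceRatio_eq, hB.coherenceRatio_eq]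
  simp only [kroneckerMap_apply, norm_mul]
  rw [mul_mul_mul_comm, Real.sqrt_mul (by positivity), div_mul_div_comm]

end PosSemidef

end Matrix

open Matrix

section Eta

variable {n m : Type*} [Fintype n] [Fintype m]

lemma eta_nonneg (A : Matrix n n ℂ) : 0 ≤ eta A :=
  Real.sSup_nonneg <| by
    rintro _ ⟨i, j, -, -, -, rfl⟩
    exact coherenceRatio_nonneg A i j

lemma eta_le {A : Matrix n n ℂ} {c : ℝ} (hc : 0 ≤ c)
    (h : ∀ i j, i ≠ j → A i i ≠ 0 → A j j ≠ 0 → coherenceRatio A i j ≤ c) : eta A ≤ c :=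
  Real.sSup_le (by rintro _ ⟨i, j, hij, hi, hj, rfl⟩; exact h i j hij hi hj) hc

lemma Matrix.PosSemidef.coherenceRatio_le_eta {A : Matrix n n ℂ} (hA : A.PosSemidef) {i j : n}
    (hij : i ≠ j) (hi : A i i ≠ 0) (hj : A j j ≠ 0) : coherenceRatio A i j ≤ eta A :=
  le_csSup ⟨1, by rintro _ ⟨i, j, -, -, -, rfl⟩; exact hA.coherenceRatio_le_one i j⟩
    ⟨i, j, hij, hi, hj, rfl⟩

variable {A : Matrix n n ℂ} {B : Matrix m m ℂ}

lemma Matrix.PosSemidef.eta_le_eta_kronecker_left (hA : A.PosSemidef) (hB : B.PosSemidef)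
    {k : m} (hk : B k k ≠ 0) : eta A ≤ eta (A ⊗ₖ B) :=
  eta_le (eta_nonneg _) fun i j hij hi hj => by
    simpa [hA.coherenceRatio_kronecker hB, hB.coherenceRatio_self hk] using
      (hA.kronecker hB).coherenceRatio_le_eta (i := (i, k)) (j := (j, k)) (by simp [hij])
        (by simp [hi, hk]) (by simp [hj, hk])

lemma Matrix.PosSemidef.eta_le_eta_kronecker_right (hA : A.PosSemidef) (hB : B.PosSemidef)
    {i : n} (hi : A i i ≠ 0) : eta B ≤ eta (A ⊗ₖ B) :=
  eta_le (eta_nonneg _) fun k l hkl hk hl => by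
    simpa [hA.coherenceRatio_kronecker hB, hA.coherenceRatio_self hi] using
      (hA.kronecker hB).coherenceRatio_le_eta (i := (i, k)) (j := (i, l)) (by simp [hkl])
        (by simp [hi, hk]) (by simp [hi, hl])

lemma Matrix.PosSemidef.eta_kronecker_le (hA : A.PosSemidef) (hB : B.PosSemidef) :
    eta (A ⊗ₖ B) ≤ max (eta A) (eta B) := by
  refine eta_le (le_max_of_le_left (eta_nonneg A)) fun ⟨i, k⟩ ⟨j, l⟩ hne hp hq => ?_
  simp only [kroneckerMap_apply, ne_eq, mul_eq_zero, not_or] at hp hq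
  rw [hA.coherenceRatio_kronecker hB]
  by_cases hij : i = j
  · subst hij
    have hkl : k ≠ l := by rintro rfl; exact hne rfl
    rw [hA.coherenceRatio_self hp.1, one_mul]
    exact le_max_of_le_right (hB.coherenceRatio_le_eta hkl hp.2 hq.2)
  · refine le_max_of_le_left ?_
    calc coherenceRatio A i j * coherenceRatio B k l ≤ coherenceRatio A i j :=
          mul_le_of_le_one_right (coherenceRatio_nonneg A i j) (hB.coherenceRatio_le_one k l)
      _ ≤ eta A := hA.coherenceRatio_le_eta hij hp.1 hq.1

end Eta

theorem stmt_2 {d₁ d₂ : ℕ} (ρ : Matrix (Fin d₁) (Fin d₁) ℂ)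
    (σ : Matrix (Fin d₂) (Fin d₂) ℂ) (hρ : ρ.PosSemidef) (hσ : σ.PosSemidef)
    (hρtr : ρ.trace = 1) (hσtr : σ.trace = 1) :
    eta (ρ ⊗ₖ σ) = max (eta ρ) (eta σ) := by
  obtain ⟨i, hi⟩ := exists_diag_ne_zero_of_trace_ne_zero (hρtr ▸ one_ne_zero)
  obtain ⟨k, hk⟩ := exists_diag_ne_zero_of_trace_ne_zero (hσtr ▸ one_ne_zero)
  exact le_antisymm (hρ.eta_kronecker_le hσ)
    (max_le (hρ.eta_le_eta_kronecker_left hσ hk) (hρ.eta_le_eta_kronecker_right hσ hi))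
end

section
/- Let ρ be a density matrix with strictly positive diagonal. Define the relation i ∼ j iff |ρ_{ij}| = √(ρ_{ii}ρ_{jj}) (including i = j). Then ∼ is an equivalence relation on {1,…,d}; that is, the graph G_ρ with edge set E_ρ = {(i,j) : |ρ_{ij}| = √(ρ_{ii}ρ_{jj})} has connected components which are all cliques. -/
open scoped ComplexOrder

/-!
Factor `ρ = Bᴴ B`; then `ρ` is the Gram matrix of the columns `vᵢ` of `B`, with `ρᵢᵢ = ‖vᵢ‖²`.
The relation becomes equality in Cauchy–Schwarz, `|⟪vᵢ, vⱼ⟫| = ‖vᵢ‖ ‖vⱼ‖`, i.e. collinearity of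
`vᵢ` and `vⱼ`, and collinearity is transitive through the nonzero vector `vⱼ`.
-/

open Matrix

section CauchySchwarzEquality

variable {𝕜 E : Type*} [RCLike 𝕜] [NormedAddCommGroup E] [InnerProductSpace 𝕜 E]

theorem norm_inner_eq_norm_mul_trans {x y z : E} (hy : y ≠ 0)
    (hxy : ‖inner 𝕜 x y‖ = ‖x‖ * ‖y‖) (hyz : ‖inner 𝕜 y z‖ = ‖y‖ * ‖z‖) :
    ‖inner 𝕜 x z‖ = ‖x‖ * ‖z‖ := by
  rw [norm_inner_symm, mul_comm] at hxy
  have hx := ((norm_inner_eq_norm_tfae 𝕜 y x).out 0 2).1 hxy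
  have hz := ((norm_inner_eq_norm_tfae 𝕜 y z).out 0 2).1 hyz
  obtain ⟨r, rfl⟩ := hx.resolve_left hy
  obtain ⟨s, rfl⟩ := hz.resolve_left hy
  simp only [inner_smul_left, inner_smul_right, inner_self_eq_norm_sq_to_K, norm_mul,
    norm_smul, RCLike.norm_conj, norm_pow, RCLike.norm_ofReal, abs_norm]
  ring

theorem equivalence_norm_inner_eq_norm_mul {ι : Type*} {v : ι → E} (hv : ∀ i, v i ≠ 0) :
    Equivalence fun i j => ‖inner 𝕜 (v i) (v j)‖ = ‖v i‖ * ‖v j‖ where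
  refl i := by simp [inner_self_eq_norm_sq_to_K, sq]
  symm h := by rwa [norm_inner_symm, mul_comm]
  trans {_ j _} := norm_inner_eq_norm_mul_trans (hv j)

end CauchySchwarzEquality

open scoped MatrixOrder in
theorem Matrix.PosSemidef.exists_eq_gram {𝕜 n : Type*} [RCLike 𝕜] [Fintype n]
    {A : Matrix n n 𝕜} (hA : A.PosSemidef) :
    ∃ v : n → EuclideanSpace 𝕜 n, A = gram 𝕜 v := by
  classical
  obtain ⟨B, rfl⟩ := CStarAlgebra.nonneg_iff_eq_star_mul_self.mp hA.nonneg
  refine ⟨fun i => WithLp.toLp 2 (Bᵀ i), Matrix.ext fun i j => ?_⟩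
  simp [gram_apply, mul_apply, PiLp.inner_apply, mul_comm]

theorem stmt_7_general {d : ℕ} (ρ : Matrix (Fin d) (Fin d) ℂ) (hρ : ρ.PosSemidef)
    (hdiag : ∀ i, 0 < (ρ i i).re) :
    Equivalence (fun i j : Fin d =>
      ‖ρ i j‖ = Real.sqrt ((ρ i i).re * (ρ j j).re)) := by
  obtain ⟨v, rfl⟩ := hρ.exists_eq_gram
  have hdiag_eq (i) : (gram ℂ v i i).re = ‖v i‖ ^ 2 := by
    simpa using inner_self_eq_norm_sq (𝕜 := ℂ) (v i)
  have hv (i) : v i ≠ 0 := by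
    have h := hdiag i
    rw [hdiag_eq] at h
    exact norm_ne_zero_iff.mp (pow_ne_zero_iff two_ne_zero |>.mp h.ne')
  simp only [hdiag_eq, ← mul_pow, Real.sqrt_sq (mul_nonneg (norm_nonneg _) (norm_nonneg _))]
  exact equivalence_norm_inner_eq_norm_mul hv

theorem stmt_7 {d : ℕ} (ρ : Matrix (Fin d) (Fin d) ℂ) (hρ : ρ.PosSemidef)
    (htr : ρ.trace = 1) (hdiag : ∀ i, 0 < (ρ i i).re) :
    Equivalence (fun i j : Fin d =>
      ‖ρ i j‖ = Real.sqrt ((ρ i i).re * (ρ j j).re)) :=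
  stmt_7_general ρ hρ hdiag
end

section
/- Let ρ be a density matrix with strictly positive diagonal, and let {I_s}_{s∈S} be the partition of {1,…,d} into equivalence classes of the relation |ρ_{ij}| = √(ρ_{ii}ρ_{jj}). Then for each s, the compressed matrix Π_{I_s} ρ Π_{I_s} has rank one, where Π_{I_s} = Σ_{i∈I_s} |i⟩⟨i|. -/
/-! A positive semidefinite matrix is a Gram matrix, `A i j = ⟪v i, v j⟫`, and the relation
`‖A k i‖ = √(A k k * A i i)` is the equality case of Cauchy–Schwarz, so `v i` is a multiple of
`v k`. On the class of `k` this gives `A i j = (A i k / A k k) * A k j`: the compression is an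
outer product, and its `(k, k)` entry is nonzero. -/

open scoped ComplexOrder

open scoped Classical

open scoped InnerProductSpace

section InnerProductSpace

variable {𝕜 E : Type*} [RCLike 𝕜] [NormedAddCommGroup E] [InnerProductSpace 𝕜 E]

theorem inner_mul_inner_self_eq_of_norm_inner_eq_norm_mul_norm {x y z : E}
    (hy : ‖⟪x, y⟫_𝕜‖ = ‖x‖ * ‖y‖) (hz : ‖⟪x, z⟫_𝕜‖ = ‖x‖ * ‖z‖) :
    ⟪y, z⟫_𝕜 * ⟪x, x⟫_𝕜 = ⟪y, x⟫_𝕜 * ⟪x, z⟫_𝕜 := by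
  by_cases hx : x = 0
  · simp [hx]
  have parallel {w : E} (hw : ‖⟪x, w⟫_𝕜‖ = ‖x‖ * ‖w‖) : ∃ r : 𝕜, w = r • x :=
    Or.resolve_left (((norm_inner_eq_norm_tfae 𝕜 x w).out 0 2).mp hw) hx
  obtain ⟨r, rfl⟩ := parallel hy
  obtain ⟨t, rfl⟩ := parallel hz
  simp only [inner_smul_left, inner_smul_right]
  ring

end InnerProductSpace

namespace Matrix

theorem rank_eq_zero_iff {K m n : Type*} [Field K] [Fintype n] {A : Matrix m n K} :
    A.rank = 0 ↔ A = 0 := by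
  rw [rank, Submodule.finrank_eq_zero, LinearMap.range_eq_bot, ← toLin'_apply',
    LinearEquiv.map_eq_zero_iff]

theorem IsHermitian.norm_apply_self_eq_sqrt {𝕜 n : Type*} [RCLike 𝕜] {A : Matrix n n 𝕜}
    (hA : A.IsHermitian) (i : n) : ‖A i i‖ = √(RCLike.re (A i i) * RCLike.re (A i i)) := by
  rw [Real.sqrt_mul_self_eq_abs, ← RCLike.norm_ofReal (K := 𝕜), hA.coe_re_apply_self]

end Matrix

namespace Matrix.PosSemidef

variable {𝕜 n : Type*} [RCLike 𝕜] [Fintype n] [DecidableEq n] {A : Matrix n n 𝕜}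

theorem exists_eq_gram_s8 (hA : A.PosSemidef) : ∃ v : n → EuclideanSpace 𝕜 n, A = gram 𝕜 v := by
  open MatrixOrder in
  obtain ⟨B, rfl⟩ := CStarAlgebra.nonneg_iff_eq_star_mul_self.mp hA.nonneg
  refine ⟨fun j => WithLp.toLp 2 fun i => B i j, ?_⟩
  rw [gram_eq_conjTranspose_mul (EuclideanSpace.basisFun n 𝕜)]
  rfl

theorem mul_apply_self_eq_of_norm_apply_eq_sqrt (hA : A.PosSemidef) {k i j : n}
    (hi : ‖A k i‖ = √(RCLike.re (A k k) * RCLike.re (A i i)))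
    (hj : ‖A k j‖ = √(RCLike.re (A k k) * RCLike.re (A j j))) :
    A i j * A k k = A i k * A k j := by
  obtain ⟨v, rfl⟩ := hA.exists_eq_gram_s8
  have sqrt_eq (a b : n) :
      √(RCLike.re (gram 𝕜 v a a) * RCLike.re (gram 𝕜 v b b)) = ‖v a‖ * ‖v b‖ := by
    simp only [gram_apply, inner_self_eq_norm_sq]
    rw [← mul_pow, Real.sqrt_sq (by positivity)]
  rw [sqrt_eq] at hi hj
  simp only [gram_apply] at hi hj ⊢
  exact inner_mul_inner_self_eq_of_norm_inner_eq_norm_mul_norm hi hj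

theorem rank_compression_eq_one (hA : A.PosSemidef) {k : n} (hk : A k k ≠ 0) {p : n → Prop}
    [DecidablePred p] (hpk : p k)
    (hp : ∀ i, p i → ‖A k i‖ = √(RCLike.re (A k k) * RCLike.re (A i i))) :
    (of fun i j => if p i ∧ p j then A i j else 0).rank = 1 := by
  have hfac : (of fun i j => if p i ∧ p j then A i j else 0) =
      vecMulVec (fun i => if p i then A i k / A k k else 0) (fun j => if p j then A k j else 0) := by
    ext i j
    by_cases hi : p i <;> by_cases hj : p j <;> simp only [of_apply, vecMulVec_apply, hi, hj,
      and_self, and_false, false_and, if_true, if_false, zero_mul, mul_zero]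
    rw [div_mul_eq_mul_div, eq_div_iff hk]
    exact hA.mul_apply_self_eq_of_norm_apply_eq_sqrt (hp i hi) (hp j hj)
  refine le_antisymm (hfac ▸ rank_vecMulVec_le _ _) (Nat.one_le_iff_ne_zero.mpr fun h => hk ?_)
  simpa [hpk] using congr_fun₂ (rank_eq_zero_iff.mp h) k k

end Matrix.PosSemidef

theorem stmt_8_general {d : ℕ} (ρ : Matrix (Fin d) (Fin d) ℂ) (hρ : ρ.PosSemidef)
    (hdiag : ∀ i, 0 < (ρ i i).re)
    (Rel : Fin d → Fin d → Prop)
    (hRel : ∀ i j, Rel i j ↔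
      ‖ρ i j‖ = Real.sqrt ((ρ i i).re * (ρ j j).re)) :
    ∀ i₀ : Fin d,
      (Matrix.of fun i j : Fin d =>
        if Rel i₀ i ∧ Rel i₀ j then ρ i j else 0).rank = 1 := by
  intro i₀
  have hρ₀ : ρ i₀ i₀ ≠ 0 := fun h => (hdiag i₀).ne' (by rw [h, Complex.zero_re])
  have hrefl : Rel i₀ i₀ := (hRel i₀ i₀).mpr (hρ.isHermitian.norm_apply_self_eq_sqrt i₀)
  exact hρ.rank_compression_eq_one hρ₀ hrefl fun i => (hRel i₀ i).mp

theorem stmt_8 {d : ℕ} (ρ : Matrix (Fin d) (Fin d) ℂ) (hρ : ρ.PosSemidef)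
    (htr : ρ.trace = 1) (hdiag : ∀ i, 0 < (ρ i i).re)
    (Rel : Fin d → Fin d → Prop)
    (hRel : ∀ i j, Rel i j ↔
      ‖ρ i j‖ = Real.sqrt ((ρ i i).re * (ρ j j).re)) :
    ∀ i₀ : Fin d,
      (Matrix.of fun i j : Fin d =>
        if Rel i₀ i ∧ Rel i₀ j then ρ i j else 0).rank = 1 :=
  stmt_8_general ρ hρ hdiag Rel hRel
end

section
/- Let ρ be a density matrix with strictly positive diagonal, E_ρ = {(i,j) : |ρ_{ij}| = √(ρ_{ii}ρ_{jj})}, and define the trimmed matrix ρ̄ := Σ_{(i,j)∈E_ρ} ρ_{ij}|i⟩⟨j|. Then ρ̄ = Σ_{s∈S} Π_{I_s} ρ Π_{I_s} where {I_s} are the equivalence classes of E_ρ; in particular ρ̄ is a positive semidefinite matrix of unit trace (a legitimate density matrix) with the same diagonal as ρ. -/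
open scoped ComplexOrder

open scoped Classical

noncomputable def trim {d : ℕ} (ρ : Matrix (Fin d) (Fin d) ℂ) :
    Matrix (Fin d) (Fin d) ℂ :=
  Matrix.of fun i j =>
    if ‖ρ i j‖ = Real.sqrt ((ρ i i).re * (ρ j j).re) then ρ i j else 0

/-!
The relation `E_ρ` is the kernel of `c`, so `trim ρ` keeps exactly the entries `ρ i j` with
`c i = c j`, which is also what the pinching `∑ s, Π_s ρ Π_s` does. Each summand is a congruence
of `ρ` by a Hermitian projector, so the pinching is positive semidefinite, and it fixes the
diagonal, hence the trace.
-/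

namespace Matrix

variable {ι κ R : Type*} [DecidableEq ι] [DecidableEq κ]

/-- `Π_{I_s}` for the class `I_s = c ⁻¹' {s}` of the partition of `ι` given by the fibres of `c`. -/
def classProjector [Zero R] [One R] (c : ι → κ) (s : κ) : Matrix ι ι R :=
  diagonal fun i => if c i = s then 1 else 0

theorem conjTranspose_classProjector [Semiring R] [StarRing R] (c : ι → κ) (s : κ) :
    (classProjector c s : Matrix ι ι R)ᴴ = classProjector c s := by
  simp only [classProjector, diagonal_conjTranspose, Pi.star_def, apply_ite star, star_one, star_zero]

theorem sum_classProjector_mul_mul_apply [Fintype ι] [Fintype κ] [Semiring R] (c : ι → κ)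
    (A : Matrix ι ι R) (i j : ι) :
    (∑ s, classProjector c s * A * classProjector c s : Matrix ι ι R) i j =
      if c i = c j then A i j else 0 := by
  simp only [sum_apply, classProjector, mul_diagonal, diagonal_mul]
  rw [Finset.sum_eq_single (c i) (fun s _ hs => by simp [Ne.symm hs]) (by simp)]
  by_cases h : c i = c j <;> simp [h, eq_comm]

theorem PosSemidef.sum_classProjector_mul_mul [Fintype ι] [Fintype κ] [Ring R] [PartialOrder R]
    [StarRing R] [AddLeftMono R] {A : Matrix ι ι R} (hA : A.PosSemidef) (c : ι → κ) :
    (∑ s, classProjector c s * A * classProjector c s).PosSemidef :=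
  posSemidef_sum _ fun s _ => by
    simpa only [conjTranspose_classProjector] using
      hA.mul_mul_conjTranspose_same (classProjector c s)

end Matrix

open Matrix

theorem trim_apply_of_iff {d : ℕ} {κ : Type*} [DecidableEq κ] {ρ : Matrix (Fin d) (Fin d) ℂ} {c : Fin d → κ}
    (hc : ∀ i j, c i = c j ↔ ‖ρ i j‖ = Real.sqrt ((ρ i i).re * (ρ j j).re)) (i j : Fin d) :
    trim ρ i j = if c i = c j then ρ i j else 0 := by
  simp only [trim, of_apply, hc]

theorem stmt_9_general {d : ℕ} (ρ : Matrix (Fin d) (Fin d) ℂ) (hρ : ρ.PosSemidef)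
    (htr : ρ.trace = 1)
    (c : Fin d → Fin d)
    (hc : ∀ i j : Fin d, c i = c j ↔
      ‖ρ i j‖ = Real.sqrt ((ρ i i).re * (ρ j j).re)) :
    trim ρ = ∑ s : Fin d,
        (Matrix.diagonal fun i => if c i = s then (1 : ℂ) else 0) * ρ *
          (Matrix.diagonal fun i => if c i = s then (1 : ℂ) else 0) ∧
      (trim ρ).PosSemidef ∧ (trim ρ).trace = 1 ∧ ∀ i, trim ρ i i = ρ i i := by
  have htrim : trim ρ = ∑ s, classProjector c s * ρ * classProjector c s := by
    ext i j
    rw [trim_apply_of_iff hc, sum_classProjector_mul_mul_apply]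
  have hdiag : ∀ i, trim ρ i i = ρ i i := fun i => by simp [trim_apply_of_iff hc]
  refine ⟨htrim, htrim ▸ hρ.sum_classProjector_mul_mul c, ?_, hdiag⟩
  rw [← htr]
  exact Finset.sum_congr rfl fun i _ => hdiag i

theorem stmt_9 {d : ℕ} (ρ : Matrix (Fin d) (Fin d) ℂ) (hρ : ρ.PosSemidef)
    (htr : ρ.trace = 1) (hdiag : ∀ i, 0 < (ρ i i).re)
    (c : Fin d → Fin d)
    (hc : ∀ i j : Fin d, c i = c j ↔
      ‖ρ i j‖ = Real.sqrt ((ρ i i).re * (ρ j j).re)) :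
    trim ρ = ∑ s : Fin d,
        (Matrix.diagonal fun i => if c i = s then (1 : ℂ) else 0) * ρ *
          (Matrix.diagonal fun i => if c i = s then (1 : ℂ) else 0) ∧
      (trim ρ).PosSemidef ∧ (trim ρ).trace = 1 ∧ ∀ i, trim ρ i i = ρ i i :=
  stmt_9_general ρ hρ htr c hc
end

section
/- For the qubit state ρ_λ = λΨ₂ + (1−λ)·(1/2)·I with λ ∈ [0,1], and for every n ≥ 1, there exist a diagonal Hermitian matrix D and an entrywise nonnegative matrix N of size 2ⁿ×2ⁿ such that |ρ_λ^{⊗n}| + D + N = λΨ₂^{⊗n}; consequently ‖|ρ_λ^{⊗n}| + D + N‖₁ = λ. -/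
/-!
Entry `(i, j)` of `ρ_λ^{⊗n}` is `λ^d / 2ⁿ`, where `d` is the Hamming distance between `i` and
`j`, while every entry of `λΨ₂^{⊗n}` is `λ / 2ⁿ`. Taking `D = -(1 - λ) 2⁻ⁿ I`, the remainder
`N = λΨ₂^{⊗n} - |ρ_λ^{⊗n}| - D` vanishes on the diagonal and is `(λ - λ^d) / 2ⁿ ≥ 0` off it,
because there `d ≥ 1` and `0 ≤ λ ≤ 1`. Finally `λΨ₂^{⊗n}` is `λ` times the projector onto the
uniform superposition, so it is positive semidefinite of trace `λ`.
-/

open scoped ComplexOrder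

noncomputable def psi2 : Matrix (Fin 2) (Fin 2) ℂ := Matrix.of fun _ _ => 1 / 2

noncomputable def rhoLam (l : ℝ) : Matrix (Fin 2) (Fin 2) ℂ :=
  (l : ℂ) • psi2 + ((1 - l : ℝ) : ℂ) • ((1 / 2 : ℂ) • 1)

theorem Matrix.posSemidef_of_const {n R : Type*} [Fintype n] [CommRing R] [PartialOrder R]
    [StarRing R] [StarOrderedRing R] {c : R} (hc : 0 ≤ c) :
    (Matrix.of fun _ _ : n => c).PosSemidef := by
  convert (Matrix.posSemidef_vecMulVec_self_star (1 : n → R)).smul hc using 1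
  ext i j
  simp

section HammingDist

variable {ι β : Type*} [Fintype ι] [DecidableEq β]

theorem prod_ite_eq_pow_hammingDist {M : Type*} [CommMonoid M] (a : M) (i j : ι → β) :
    ∏ k, (if i k = j k then 1 else a) = a ^ hammingDist i j := by
  rw [Finset.prod_ite, Finset.prod_const_one, one_mul, Finset.prod_const]
  rfl

theorem sub_pow_hammingDist_add_ite_nonneg {l : ℝ} (hl0 : 0 ≤ l) (hl1 : l ≤ 1) (i j : ι → β) :
    0 ≤ l - l ^ hammingDist i j + if i = j then 1 - l else 0 := by
  by_cases h : i = j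
  · simp [h]
  · simp only [h, if_false, add_zero, sub_nonneg]
    exact pow_le_of_le_one hl0 hl1 (hammingDist_ne_zero.mpr h)

end HammingDist

theorem rhoLam_apply (l : ℝ) (a b : Fin 2) :
    rhoLam l a b = (if a = b then 1 else (l : ℂ)) / 2 := by
  by_cases h : a = b <;> simp [rhoLam, psi2, h] <;> ring

section TensorPower

variable {ι : Type*} [Fintype ι]

theorem tensorPower_psi2_eq_const :
    Matrix.of (fun i j : ι → Fin 2 => ∏ k, psi2 (i k) (j k)) =
      Matrix.of fun _ _ => ((1 / 2 ^ Fintype.card ι : ℝ) : ℂ) := by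
  ext i j
  simp [psi2, Finset.prod_const]

theorem prod_rhoLam_apply (l : ℝ) (i j : ι → Fin 2) :
    ∏ k, rhoLam l (i k) (j k) = ((l ^ hammingDist i j / 2 ^ Fintype.card ι : ℝ) : ℂ) := by
  simp only [rhoLam_apply, Finset.prod_div_distrib, prod_ite_eq_pow_hammingDist,
    Finset.prod_const, Finset.card_univ]
  push_cast
  rfl

theorem norm_prod_rhoLam_apply {l : ℝ} (hl : 0 ≤ l) (i j : ι → Fin 2) :
    ‖∏ k, rhoLam l (i k) (j k)‖ = l ^ hammingDist i j / 2 ^ Fintype.card ι := by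
  rw [prod_rhoLam_apply, Complex.norm_real, Real.norm_of_nonneg (by positivity)]

end TensorPower

theorem stmt_15_general (l : ℝ) (hl0 : 0 ≤ l) (hl1 : l ≤ 1) (n : ℕ) :
    ∃ D N : Matrix (Fin n → Fin 2) (Fin n → Fin 2) ℂ,
      (∀ i j, i ≠ j → D i j = 0) ∧ D.IsHermitian ∧
      (∀ i j, (N i j).im = 0 ∧ 0 ≤ (N i j).re) ∧
      (Matrix.of fun i j =>
          ((‖∏ k, rhoLam l (i k) (j k)‖ : ℝ) : ℂ)) + D + N =
        (l : ℂ) • Matrix.of (fun i j => ∏ k, psi2 (i k) (j k)) ∧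
      ((l : ℂ) • Matrix.of
          (fun i j : Fin n → Fin 2 => ∏ k, psi2 (i k) (j k))).PosSemidef ∧
      ((l : ℂ) • Matrix.of
          (fun i j : Fin n → Fin 2 => ∏ k, psi2 (i k) (j k))).trace = l := by
  simp only [tensorPower_psi2_eq_const, Fintype.card_fin]
  set P : Matrix (Fin n → Fin 2) (Fin n → Fin 2) ℂ :=
    (l : ℂ) • Matrix.of fun _ _ => ((1 / 2 ^ n : ℝ) : ℂ)
  set A : Matrix (Fin n → Fin 2) (Fin n → Fin 2) ℂ :=
    Matrix.of fun i j => ((‖∏ k, rhoLam l (i k) (j k)‖ : ℝ) : ℂ)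
  set D : Matrix (Fin n → Fin 2) (Fin n → Fin 2) ℂ :=
    Matrix.diagonal fun _ => ((-(1 - l) / 2 ^ n : ℝ) : ℂ)
  have hN (i j : Fin n → Fin 2) : (P - A - D) i j =
      (((l - l ^ hammingDist i j + if i = j then 1 - l else 0) / 2 ^ n : ℝ) : ℂ) := by
    simp only [P, A, D, Matrix.sub_apply, Matrix.smul_apply, Matrix.of_apply,
      norm_prod_rhoLam_apply hl0, Fintype.card_fin, Matrix.diagonal_apply]
    split_ifs <;> push_cast <;> simp <;> ring
  refine ⟨D, P - A - D, fun i j h => Matrix.diagonal_apply_ne _ h,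
    Matrix.isHermitian_diagonal_iff.mpr fun _ => Complex.conj_ofReal _,
    fun i j => ?_, by abel, ?_, ?_⟩
  · rw [hN, Complex.ofReal_im, Complex.ofReal_re]
    exact ⟨rfl, div_nonneg (sub_pow_hammingDist_add_ite_nonneg hl0 hl1 i j) (by positivity)⟩
  · exact (Matrix.posSemidef_of_const (by positivity)).smul (by exact_mod_cast hl0)
  · simp [P, Matrix.trace]
    field_simp

theorem stmt_15 (l : ℝ) (hl0 : 0 ≤ l) (hl1 : l ≤ 1) (n : ℕ) (hn : 1 ≤ n) :
    ∃ D N : Matrix (Fin n → Fin 2) (Fin n → Fin 2) ℂ,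
      (∀ i j, i ≠ j → D i j = 0) ∧ D.IsHermitian ∧
      (∀ i j, (N i j).im = 0 ∧ 0 ≤ (N i j).re) ∧
      (Matrix.of fun i j =>
          ((‖∏ k, rhoLam l (i k) (j k)‖ : ℝ) : ℂ)) + D + N =
        (l : ℂ) • Matrix.of (fun i j => ∏ k, psi2 (i k) (j k)) ∧
      ((l : ℂ) • Matrix.of
          (fun i j : Fin n → Fin 2 => ∏ k, psi2 (i k) (j k))).PosSemidef ∧
      ((l : ℂ) • Matrix.of
          (fun i j : Fin n → Fin 2 => ∏ k, psi2 (i k) (j k))).trace = l :=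
  stmt_15_general l hl0 hl1 n
end
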